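/- A semiprime ring R is a right fs-ring with finite right hollow dimension if and only if R is semisimple. -/

import Mathlib

/-- A submodule `N` of `M` is small (superfluous): `N + A = M` implies `A = M`. -/
def IsSmallSubmodule {R M : Type*} [Ring R] [AddCommGroup M] [Module R M]
    (N : Submodule R M) : Prop :=
  ∀ A : Submodule R M, N ⊔ A = ⊤ → A = ⊤

/-- `M` is an fs-module: it has only finitely many small submodules. -/
def IsFsModule (R M : Type*) [Ring R] [AddCommGroup M] [Module R M] : Prop :=
  {N : Submodule R M | IsSmallSubmodule N}.Finite

/-- The radical of `M`, as the sum of all small submodules of `M`. -/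
def modRad (R M : Type*) [Ring R] [AddCommGroup M] [Module R M] : Submodule R M :=
  sSup {N : Submodule R M | IsSmallSubmodule N}

/-- The radical of `M`, as the intersection of all maximal submodules of `M`. -/
def modRad' (R M : Type*) [Ring R] [AddCommGroup M] [Module R M] : Submodule R M :=
  sInf {N : Submodule R M | IsCoatom N}

/-- The socle of `M`: the sum of all minimal (simple) submodules of `M`. -/
def modSoc (R M : Type*) [Ring R] [AddCommGroup M] [Module R M] : Submodule R M :=
  sSup {N : Submodule R M | IsAtom N}

/-- `M` has finite hollow dimension: for every descending chain `N₁ ⊇ N₂ ⊇ ⋯`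
there is `n` such that `Nₙ / N_k` is small in `M / N_k` for all `k ≥ n`. -/
def HasFiniteHollowDim (R M : Type*) [Ring R] [AddCommGroup M] [Module R M] : Prop :=
  ∀ N : ℕ → Submodule R M, (∀ i j, i ≤ j → N j ≤ N i) →
    ∃ n, ∀ k, n ≤ k → IsSmallSubmodule (Submodule.map (N k).mkQ (N n))

/-- `M` has finite Goldie dimension: it contains no infinite direct sum of
nonzero submodules. -/
def HasFiniteGoldieDim (R M : Type*) [Ring R] [AddCommGroup M] [Module R M] : Prop :=
  ¬ ∃ f : ℕ → Submodule R M, (∀ i, f i ≠ ⊥) ∧ iSupIndep f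

/-!
Work with right ideals, i.e. `Rᵐᵒᵖ`-submodules of `R`; semisimplicity is left–right symmetric.
As `R_R` is finitely generated, its Jacobson radical `J` is small, so under the fs condition only
finitely many right ideals lie in `J`. If `J ≠ 0` it contains a minimal right ideal `I`.
Semiprimeness gives `a ∈ I` and `b` with `aba ≠ 0`; minimality gives `I = abaR`, so
`ab = ab · e` for some `e ∈ I ⊆ J`, and then `ab = 0` because `1 - e` is right invertible.
Hence `J = 0`. Finite hollow dimension forbids infinitely descending chains of finite
intersections of maximal right ideals, so some such intersection already lies in `J = 0`, and
`R_R` embeds into a finite product of simple modules. Conversely, a finitely generated semisimple module is Artinian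
and has no nonzero small submodules.
-/

open MulOpposite Submodule

section SmallSubmodule

variable {R M : Type*} [Ring R] [AddCommGroup M] [Module R M]

theorem isSmallSubmodule_bot : IsSmallSubmodule (⊥ : Submodule R M) := fun A hA => by
  simpa using hA

theorem IsSmallSubmodule.mono {N N' : Submodule R M} (h : IsSmallSubmodule N') (hle : N ≤ N') :
    IsSmallSubmodule N := fun A hA => h A (top_unique (hA ▸ sup_le_sup_right hle A))

theorem IsSmallSubmodule.eq_bot [ComplementedLattice (Submodule R M)] {N : Submodule R M}
    (h : IsSmallSubmodule N) : N = ⊥ := by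
  obtain ⟨A, hA⟩ := exists_isCompl N
  simpa [h A hA.sup_eq_top] using hA.inf_eq_bot

theorem IsSmallSubmodule.eq_top_of_map_mkQ {P N A : Submodule R M}
    (h : IsSmallSubmodule (N.map P.mkQ)) (hNA : N ⊔ A = ⊤) (hPA : P ≤ A) : A = ⊤ := by
  have : A.map P.mkQ = ⊤ := h _ (by rw [← Submodule.map_sup, hNA, Submodule.map_top, range_mkQ])
  rwa [map_mkQ_eq_top, sup_eq_right.mpr hPA] at this

theorem isSmallSubmodule_jacobson [IsCoatomic (Submodule R M)] :
    IsSmallSubmodule (Module.jacobson R M) := fun A hA => by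
  by_contra hA'
  obtain ⟨m, hm, hAm⟩ := (eq_top_or_exists_le_coatom A).resolve_left hA'
  exact hm.ne_top (top_unique (hA ▸ sup_le (sInf_le hm) hAm))

theorem IsFsModule.finite_le_jacobson [IsCoatomic (Submodule R M)] (h : IsFsModule R M) :
    {N : Submodule R M | N ≤ Module.jacobson R M}.Finite :=
  h.subset fun _ hN => isSmallSubmodule_jacobson.mono hN

theorem IsSemisimpleModule.isFsModule [IsSemisimpleModule R M] : IsFsModule R M :=
  (Set.finite_singleton ⊥).subset fun _ hN => hN.eq_bot

end SmallSubmodule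

section HollowDim

variable (R M : Type*) [Ring R] [AddCommGroup M] [Module R M]

def finsetInfCoatoms : Set (Submodule R M) :=
  {N | ∃ s : Finset (Submodule R M), (∀ m ∈ s, IsCoatom m) ∧ s.inf id = N}

variable {R M}

theorem HasFiniteHollowDim.wellFoundedOn_finsetInfCoatoms (h : HasFiniteHollowDim R M) :
    (finsetInfCoatoms R M).WellFoundedOn (· < ·) := by
  rw [Set.wellFoundedOn_iff_no_descending_seq]
  intro f hf
  have hanti : ∀ i j, i ≤ j → f j ≤ f i := fun i j hij =>
    hij.eq_or_lt.elim (fun h => h ▸ le_rfl) fun h => (f.map_rel_iff.mpr h).le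
  obtain ⟨n, hn⟩ := h f hanti
  obtain ⟨s, hs, hsf⟩ := hf (n + 1)
  have hnle : ¬ f n ≤ s.inf id := hsf ▸ (f.map_rel_iff.mpr n.lt_succ_self).not_ge
  obtain ⟨m, hms, hnm⟩ : ∃ m ∈ s, ¬ f n ≤ m := by simpa [Finset.le_inf_iff] using hnle
  exact (hs m hms).ne_top <| (hn (n + 1) n.le_succ).eq_top_of_map_mkQ
    (codisjoint_iff.mp ((hs m hms).not_le_iff_codisjoint.mp hnm).symm)
    (hsf ▸ Finset.inf_le hms)

theorem HasFiniteHollowDim.exists_finset_inf_le_jacobson (h : HasFiniteHollowDim R M) :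
    ∃ s : Finset (Submodule R M), (∀ m ∈ s, IsCoatom m) ∧ s.inf id ≤ Module.jacobson R M := by
  classical
  obtain ⟨_, ⟨s, hs, rfl⟩, hmin⟩ :=
    h.wellFoundedOn_finsetInfCoatoms.exists_minimal ⟨⊤, ∅, by simp, by simp⟩
  refine ⟨s, hs, le_sInf fun m hm => ?_⟩
  have hins : insert m s ∈ {t : Finset _ | ∀ m ∈ t, IsCoatom m} := by
    simpa [Finset.forall_mem_insert] using ⟨hm, hs⟩
  calc s.inf id ≤ (insert m s).inf id :=
        hmin ⟨insert m s, hins, rfl⟩ (Finset.inf_mono (Finset.subset_insert m s))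
    _ ≤ m := Finset.inf_le (Finset.mem_insert_self m s)

theorem HasFiniteHollowDim.isSemisimpleModule (h : HasFiniteHollowDim R M)
    (hJ : Module.jacobson R M = ⊥) : IsSemisimpleModule R M := by
  obtain ⟨s, hs, hinf⟩ := h.exists_finset_inf_le_jacobson
  have (m : s) : IsSimpleModule R (M ⧸ m.1) := isSimpleModule_iff_isCoatom.mpr (hs _ m.2)
  refine .of_injective (LinearMap.pi fun m : s => m.1.mkQ) <| LinearMap.ker_eq_bot.mp <|
    le_bot_iff.mp fun x hx => hJ ▸ hinf (mem_finsetInf.mpr fun m hm => ?_)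
  exact (Quotient.mk_eq_zero m).mp (congr_fun hx ⟨m, hm⟩)

theorem IsArtinian.hasFiniteHollowDim [IsArtinian R M] : HasFiniteHollowDim R M := by
  intro N hN
  obtain ⟨n, hn⟩ := IsArtinian.monotone_stabilizes
    ⟨fun k => OrderDual.toDual (N k), fun i j hij => hN i j hij⟩
  refine ⟨n, fun k hk => ?_⟩
  rw [show N n = N k from hn k hk, mkQ_map_self]
  exact isSmallSubmodule_bot

end HollowDim

section RightIdeals

variable {R : Type*} [Ring R]

instance : Module.Finite Rᵐᵒᵖ R := .equiv (opLinearEquiv Rᵐᵒᵖ).symm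

theorem isSemisimpleModule_mulOpposite_iff : IsSemisimpleModule Rᵐᵒᵖ R ↔ IsSemisimpleRing R :=
  (opLinearEquiv Rᵐᵒᵖ).isSemisimpleModule_iff.trans isSemisimpleRing_mulOpposite_iff

theorem eq_zero_of_mul_eq_self_of_mem_jacobson {x e : R} (he : e ∈ Module.jacobson Rᵐᵒᵖ R)
    (hxe : x * e = x) : x = 0 := by
  -- `e` generates a small right ideal, which forces `1 - e` to be right invertible
  have hsmall : IsSmallSubmodule (span Rᵐᵒᵖ {e}) :=
    isSmallSubmodule_jacobson.mono (span_le.mpr (Set.singleton_subset_iff.mpr he))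
  have hsup : span Rᵐᵒᵖ {e} ⊔ span Rᵐᵒᵖ {1 - e} = ⊤ := eq_top_iff'.mpr fun y => by
    have := add_mem (mem_sup_left (smul_mem _ (op y) (mem_span_singleton_self e)))
      (mem_sup_right (smul_mem _ (op y) (mem_span_singleton_self (1 - e))))
    simpa [op_smul_eq_mul, sub_mul] using this
  obtain ⟨c, hc⟩ := mem_span_singleton.mp ((hsmall _ hsup).symm ▸ mem_top : (1 : R) ∈ _)
  rw [← op_unop c, op_smul_eq_mul] at hc
  calc x = x * ((1 - e) * unop c) := by rw [hc, mul_one]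
    _ = 0 := by rw [← mul_assoc, mul_sub, mul_one, hxe, sub_self, zero_mul]

theorem jacobson_eq_bot_of_isFsModule (hsp : ∀ a : R, (∀ b : R, a * b * a = 0) → a = 0)
    (h : IsFsModule Rᵐᵒᵖ R) : Module.jacobson Rᵐᵒᵖ R = ⊥ := by
  set J := Module.jacobson Rᵐᵒᵖ R
  by_contra hJ
  obtain ⟨I, ⟨hIJ, hI⟩, hmin⟩ := (h.finite_le_jacobson.subset fun _ hN => hN.1 :
    {N | N ≤ J ∧ N ≠ ⊥}.Finite).exists_minimal ⟨J, le_rfl, hJ⟩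
  obtain ⟨a, haI, ha⟩ := exists_mem_ne_zero_of_ne_bot hI
  obtain ⟨b, hab⟩ : ∃ b, a * b * a ≠ 0 := by
    by_contra! hall
    exact ha (hsp a hall)
  have habI : ∀ r, a * r ∈ I := fun r => by simpa [op_smul_eq_mul] using I.smul_mem (op r) haI
  have hspan : I ≤ span Rᵐᵒᵖ {a * b * a} := by
    have hle : span Rᵐᵒᵖ {a * b * a} ≤ I := span_le.mpr (by simpa [mul_assoc] using habI (b * a))
    exact hmin ⟨hle.trans hIJ, by simpa using hab⟩ hle
  obtain ⟨c, hc⟩ := mem_span_singleton.mp (hspan (habI b))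
  rw [← op_unop c, op_smul_eq_mul] at hc
  have hzero : a * b = 0 := eq_zero_of_mul_eq_self_of_mem_jacobson (e := a * unop c)
    (hIJ (habI _)) (by rw [← mul_assoc, hc])
  exact hab (by rw [hzero, zero_mul])

end RightIdeals

theorem semiprime_fs_finite_hollow_iff_semisimple (R : Type*) [Ring R]
    (hsp : ∀ a : R, (∀ b : R, a * b * a = 0) → a = 0) :
    (IsFsModule Rᵐᵒᵖ R ∧ HasFiniteHollowDim Rᵐᵒᵖ R) ↔ IsSemisimpleRing R := by
  rw [← isSemisimpleModule_mulOpposite_iff]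
  exact ⟨fun ⟨hfs, hhollow⟩ => hhollow.isSemisimpleModule (jacobson_eq_bot_of_isFsModule hsp hfs),
    fun _ => ⟨IsSemisimpleModule.isFsModule, IsArtinian.hasFiniteHollowDim⟩⟩
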